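/- For any two matrices U ∈ ℂ^{m×p} and V ∈ ℂ^{q×m}, the matrix E := U(VU)†V satisfies R(E) = R(U) ∩ ((UU*)†(R(U) ∩ N(V)))⊥, where (UU*)†(S) denotes the image of the subspace S under the linear map given by the matrix (UU*)† and ⊥ denotes orthogonal complement in ℂ^m. -/

import Mathlib

/-!
Put `T = U Uᴴ`, which is Hermitian with `R(T) = R(U)`, and `A = V U`. The Penrose equations for
`A†` give `R(U A† V) = R(U Aᴴ) = T(R(Vᴴ)) = T(N(V)ᗮ)`. Since `T W T = T`, we have `T (W b) = b` on
`R(T)`, so `⟪T t, W b⟫ = ⟪t, b⟫` there; hence `R(T) ∩ (W S)ᗮ = T(Sᗮ)` for every `S ≤ R(T)`.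
For `S = R(T) ∩ N(V)` we get `Sᗮ = N(T) + N(V)ᗮ`, and `T` kills `N(T)`.
-/

open Matrix

/-- The four Penrose conditions characterizing the Moore-Penrose inverse. -/
def IsMoorePenrose {m n : ℕ} (A : Matrix (Fin m) (Fin n) ℂ)
    (X : Matrix (Fin n) (Fin m) ℂ) : Prop :=
  A * X * A = A ∧ X * A * X = X ∧ (A * X)ᴴ = A * X ∧ (X * A)ᴴ = X * A

/-- The range (column space) of a matrix, as a subspace of Euclidean space. -/
noncomputable def mrange {m n : ℕ} (A : Matrix (Fin m) (Fin n) ℂ) :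
    Submodule ℂ (EuclideanSpace ℂ (Fin m)) :=
  LinearMap.range (Matrix.toEuclideanLin A)

/-- The null space of a matrix, as a subspace of Euclidean space. -/
noncomputable def mker {m n : ℕ} (A : Matrix (Fin m) (Fin n) ℂ) :
    Submodule ℂ (EuclideanSpace ℂ (Fin n)) :=
  LinearMap.ker (Matrix.toEuclideanLin A)

namespace LinearMap.IsSymmetric

open Submodule

variable {𝕜 E : Type*} [RCLike 𝕜] [NormedAddCommGroup E] [InnerProductSpace 𝕜 E]
  {T w : E →ₗ[𝕜] E}

lemma map_orthogonal_of_le_range (hT : T.IsSymmetric) (hTw : T ∘ₗ w ∘ₗ T = T)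
    {S : Submodule 𝕜 E} (hS : S ≤ range T) :
    map T Sᗮ = range T ⊓ (map w S)ᗮ := by
  -- `T (w b) = b` for `b ∈ range T`
  have inner_apply_eq {t b : E} (hb : b ∈ S) : inner 𝕜 (T t) (w b) = inner 𝕜 t b := by
    obtain ⟨c, rfl⟩ := hS hb
    rw [hT, ← LinearMap.comp_apply w T, ← LinearMap.comp_apply T, hTw]
  apply le_antisymm
  · rintro _ ⟨t, ht, rfl⟩
    refine ⟨⟨t, rfl⟩, ?_⟩
    rintro _ ⟨b, hb, rfl⟩
    rw [inner_eq_zero_symm, inner_apply_eq hb, inner_eq_zero_symm]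
    exact ht b hb
  · rintro _ ⟨⟨t, rfl⟩, hx⟩
    refine ⟨t, fun b hb => ?_, rfl⟩
    rw [inner_eq_zero_symm, ← inner_apply_eq hb, inner_eq_zero_symm]
    exact hx (w b) ⟨b, hb, rfl⟩

theorem map_orthogonal_eq [FiniteDimensional 𝕜 E] (hT : T.IsSymmetric)
    (hTw : T ∘ₗ w ∘ₗ T = T) (K : Submodule 𝕜 E) :
    map T Kᗮ = range T ⊓ (map w (range T ⊓ K))ᗮ := by
  have orthogonal_inf : (range T ⊓ K)ᗮ = ker T ⊔ Kᗮ := by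
    rw [← hT.orthogonal_range, ← orthogonal_orthogonal (_ ⊔ _), ← inf_orthogonal,
      orthogonal_orthogonal, orthogonal_orthogonal]
  rw [← map_orthogonal_of_le_range hT hTw inf_le_left, orthogonal_inf, Submodule.map_sup,
    (le_ker_iff_map).mp le_rfl, bot_sup_eq]

end LinearMap.IsSymmetric

section MatrixRange

variable {m n p : ℕ}

lemma mrange_mul (A : Matrix (Fin m) (Fin n) ℂ) (B : Matrix (Fin n) (Fin p) ℂ) :
    mrange (A * B) = (mrange B).map (toEuclideanLin A) := by
  rw [mrange, mrange, toLpLin_mul_same, LinearMap.range_comp]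

lemma mrange_mul_le (A : Matrix (Fin m) (Fin n) ℂ) (B : Matrix (Fin n) (Fin p) ℂ) :
    mrange (A * B) ≤ mrange A := by
  rw [mrange_mul]
  exact LinearMap.map_le_range

lemma mrange_mul_conjTranspose_self (A : Matrix (Fin m) (Fin n) ℂ) :
    mrange (A * Aᴴ) = mrange A := by
  rw [mrange, toLpLin_mul_same, toEuclideanLin_conjTranspose_eq_adjoint,
    LinearMap.range_self_comp_adjoint, mrange]

lemma mrange_conjTranspose (A : Matrix (Fin m) (Fin n) ℂ) :
    mrange Aᴴ = (mker A)ᗮ := by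
  rw [mrange, mker, toEuclideanLin_conjTranspose_eq_adjoint, LinearMap.orthogonal_ker]

end MatrixRange

namespace IsMoorePenrose

variable {m n : ℕ} {A : Matrix (Fin m) (Fin n) ℂ} {X : Matrix (Fin n) (Fin m) ℂ}

lemma eq_conjTranspose_mul (h : IsMoorePenrose A X) : X = Aᴴ * (Xᴴ * X) := by
  obtain ⟨-, hXAX, -, hXA⟩ := h
  calc X = (X * A)ᴴ * X := by rw [hXA, hXAX]
    _ = Aᴴ * (Xᴴ * X) := by rw [conjTranspose_mul, Matrix.mul_assoc]

lemma conjTranspose_eq_mul (h : IsMoorePenrose A X) : Aᴴ = X * (A * Aᴴ) := by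
  obtain ⟨hAXA, -, -, hXA⟩ := h
  calc Aᴴ = (A * X * A)ᴴ := by rw [hAXA]
    _ = (X * A)ᴴ * Aᴴ := by simp only [conjTranspose_mul, Matrix.mul_assoc]
    _ = X * (A * Aᴴ) := by rw [hXA, Matrix.mul_assoc]

end IsMoorePenrose

lemma mrange_mul_moorePenrose_mul {m p q : ℕ} (U : Matrix (Fin m) (Fin p) ℂ)
    (V : Matrix (Fin q) (Fin m) ℂ) {X : Matrix (Fin p) (Fin q) ℂ} (hX : IsMoorePenrose (V * U) X) :
    mrange (U * X * V) = mrange (U * Uᴴ * Vᴴ) := by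
  have hUV : U * Uᴴ * Vᴴ = U * (V * U)ᴴ := by
    rw [conjTranspose_mul, Matrix.mul_assoc]
  rw [hUV]
  apply le_antisymm
  · calc mrange (U * X * V) = mrange (U * (V * U)ᴴ * (Xᴴ * X * V)) := by
          conv_lhs => rw [hX.eq_conjTranspose_mul]
          simp only [Matrix.mul_assoc]
      _ ≤ _ := mrange_mul_le _ _
  · calc mrange (U * (V * U)ᴴ) = mrange (U * X * V * (U * (V * U)ᴴ)) := by
          conv_lhs => rw [hX.conjTranspose_eq_mul]
          simp only [Matrix.mul_assoc]
      _ ≤ _ := mrange_mul_le _ _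

/-- For any matrices `U ∈ ℂ^{m×p}` and `V ∈ ℂ^{q×m}`, the matrix
`E = U (VU)† V` satisfies `R(E) = R(U) ∩ ((UU*)†(R(U) ∩ N(V)))⊥`. -/
theorem stmt8 {m p q : ℕ} (U : Matrix (Fin m) (Fin p) ℂ) (V : Matrix (Fin q) (Fin m) ℂ)
    (X : Matrix (Fin p) (Fin q) ℂ) (hX : IsMoorePenrose (V * U) X)
    (W : Matrix (Fin m) (Fin m) ℂ) (hW : IsMoorePenrose (U * Uᴴ) W) :
    mrange (U * X * V) =
      mrange U ⊓ (Submodule.map (Matrix.toEuclideanLin W) (mrange U ⊓ mker V))ᗮ := by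
  have hT : (toEuclideanLin (U * Uᴴ)).IsSymmetric :=
    isSymmetric_toEuclideanLin_iff.mpr (isHermitian_mul_conjTranspose_self U)
  have hTW : toEuclideanLin (U * Uᴴ) ∘ₗ toEuclideanLin W ∘ₗ toEuclideanLin (U * Uᴴ) =
      toEuclideanLin (U * Uᴴ) := by
    rw [← toLpLin_mul_same, ← toLpLin_mul_same, ← Matrix.mul_assoc, hW.1]
  rw [mrange_mul_moorePenrose_mul U V hX, mrange_mul, mrange_conjTranspose,
    hT.map_orthogonal_eq hTW, ← mrange, mrange_mul_conjTranspose_self]
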